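/- If Z has the Langmuir-incomplete gamma distribution LIG(a,b) with b > a > 0, then E[Z] = a/b. Consequently the limiting mean of the normalized stationary state X_N/N of the M_1 LBD process equals c_1/(c_1+c_2), the stable equilibrium of the deterministic Langmuir equation du/dt = c_1 − (c_1+c_2)u. -/
import Mathlib


open MeasureTheory Real Filter

/-- Lower incomplete gamma function `Γ(a,b) = ∫_0^b s^(a-1) e^(-s) ds`. -/
noncomputable def lGamma (a b : ℝ) : ℝ := ∫ s in (0:ℝ)..b, s ^ (a - 1) * Real.exp (-s)

/-- The incomplete gamma distribution `IG(a,b,1)` with density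
`Γ(a,b)⁻¹ b^a x^(a-1) e^(-bx)` on `(0,1)`. -/
noncomputable def igMeasure (a b : ℝ) : Measure ℝ :=
  (volume.restrict (Set.Ioo (0:ℝ) 1)).withDensity
    (fun x => ENNReal.ofReal ((lGamma a b)⁻¹ * b ^ a * x ^ (a - 1) * Real.exp (-(b * x))))

/-- The boundary atom mass `π_{a,b} = b^a / (b^a + Γ(a,b)(b-a)e^b)`. -/
noncomputable def ligPi (a b : ℝ) : ℝ :=
  b ^ a / (b ^ a + lGamma a b * (b - a) * Real.exp b)

/-- The Langmuir-incomplete gamma distribution `LIG(a,b)`: the mixture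
`(1-π_{a,b}) IG(a,b,1) + π_{a,b} δ_1`. -/
noncomputable def ligMeasure (a b : ℝ) : Measure ℝ :=
  ENNReal.ofReal (1 - ligPi a b) • igMeasure a b +
    ENNReal.ofReal (ligPi a b) • Measure.dirac 1

lemma lGamma_intervalIntegrable {a : ℝ} (ha : 0 < a) {b : ℝ} (hb : 0 ≤ b) :
    IntervalIntegrable (fun s => s ^ (a - 1) * Real.exp (-s)) volume 0 b := by
  rw [intervalIntegrable_iff_integrableOn_Ioc_of_le hb]
  refine (((Real.GammaIntegral_convergent ha).mono_set
    Set.Ioc_subset_Ioi_self).congr_fun ?_ measurableSet_Ioc)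
  intro x _; exact mul_comm _ _

lemma lGamma_pos {a b : ℝ} (ha : 0 < a) (hb : 0 < b) : 0 < lGamma a b := by
  refine intervalIntegral.intervalIntegral_pos_of_pos_on
    (lGamma_intervalIntegrable ha hb.le) (fun x hx => ?_) hb
  exact mul_pos (Real.rpow_pos_of_pos hx.1 _) (Real.exp_pos _)

lemma lGamma_eq_partialGamma {a b : ℝ} (hb : 0 ≤ b) :
    ((lGamma a b : ℝ) : ℂ) = Complex.partialGamma a b := by
  unfold Complex.partialGamma lGamma
  rw [← intervalIntegral.integral_ofReal]
  refine intervalIntegral.integral_congr fun x hx => ?_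
  have hx0 : 0 ≤ x := by
    rw [Set.uIcc_of_le hb] at hx; exact hx.1
  push_cast
  rw [Complex.ofReal_cpow hx0]
  push_cast
  ring

lemma lGamma_succ {a b : ℝ} (ha : 0 < a) (hb : 0 ≤ b) :
    lGamma (a + 1) b = a * lGamma a b - Real.exp (-b) * b ^ a := by
  have h := Complex.partialGamma_add_one (s := (a : ℂ)) (by simpa using ha) hb
  have h1 : ((a : ℂ) + 1) = ((a + 1 : ℝ) : ℂ) := by push_cast; ring
  rw [h1, ← lGamma_eq_partialGamma hb, ← lGamma_eq_partialGamma hb,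
    ← Complex.ofReal_cpow hb] at h
  exact_mod_cast h

/-- If `Z ~ LIG(a,b)` with `b > a > 0` then `E[Z] = a/b`; consequently, with
`a = c₁/c₃` and `b = (c₁+c₂)/c₃`, the limiting mean of the normalized stationary state of
the `M₁` LBD process is `c₁/(c₁+c₂)`, the stable equilibrium of the deterministic
Langmuir equation. -/
theorem lig_mean (a b c1 c2 c3 : ℝ) (ha : 0 < a) (hab : a < b)
    (hc1 : 0 < c1) (hc2 : 0 < c2) (hc3 : 0 < c3) :
    (∫ x, x ∂(ligMeasure a b)) = a / b ∧
      (c1 / c3) / ((c1 + c2) / c3) = c1 / (c1 + c2) := by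
  have hb : 0 < b := ha.trans hab
  have hG : 0 < lGamma a b := lGamma_pos ha hb
  set G := lGamma a b with hGdef
  have hba : 0 < b ^ a := Real.rpow_pos_of_pos hb a
  -- positivity of the denominator in ligPi and bounds on ligPi
  have hD : 0 < b ^ a + G * (b - a) * Real.exp b := by
    have := mul_pos (mul_pos hG (sub_pos.2 hab)) (Real.exp_pos b)
    linarith
  have hpi0 : 0 ≤ ligPi a b := by
    unfold ligPi
    exact div_nonneg hba.le hD.le
  have hpi1 : ligPi a b ≤ 1 := by
    unfold ligPi
    rw [div_le_one hD]
    nlinarith [mul_pos (mul_pos hG (sub_pos.2 hab)) (Real.exp_pos b)]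
  -- the density as an ℝ≥0-valued function
  set d : ℝ → ℝ := fun x => G⁻¹ * b ^ a * x ^ (a - 1) * Real.exp (-(b * x)) with hd
  have hd_meas : Measurable fun x => (d x).toNNReal := by
    apply Measurable.real_toNNReal
    fun_prop
  have hig_eq : igMeasure a b =
      (volume.restrict (Set.Ioo (0:ℝ) 1)).withDensity (fun x => ((d x).toNNReal : ENNReal)) := rfl
  set g : ℝ → ℝ := fun x => G⁻¹ * b ^ a * (x ^ a * Real.exp (-(b * x))) with hg
  have hxa : Continuous fun x : ℝ => x ^ a :=
    continuous_id.rpow_const fun x => Or.inr ha.le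
  have hg_cont : Continuous g := continuous_const.mul (hxa.mul (by fun_prop))
  have hae : (fun x => (d x).toNNReal • x) =ᵐ[volume.restrict (Set.Ioo (0:ℝ) 1)] g := by
    filter_upwards [ae_restrict_mem measurableSet_Ioo] with x hx
    have hx0 : 0 < x := hx.1
    have hdnn : 0 ≤ d x := by
      have h1 : (0:ℝ) ≤ x ^ (a - 1) := (Real.rpow_pos_of_pos hx0 _).le
      have hGi : (0:ℝ) ≤ G⁻¹ := (inv_pos.2 hG).le
      have := Real.exp_pos (-(b * x))
      positivity
    have hpow : x ^ (a - 1) * x = x ^ a := by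
      rw [← Real.rpow_add_one hx0.ne' (a - 1), sub_add_cancel]
    show ((d x).toNNReal : ℝ) * x = g x
    rw [Real.coe_toNNReal _ hdnn, hd, hg]
    dsimp only
    rw [show G⁻¹ * b ^ a * x ^ (a - 1) * Real.exp (-(b * x)) * x
        = G⁻¹ * b ^ a * (x ^ (a - 1) * x * Real.exp (-(b * x))) by ring, hpow]
  have hgint : IntegrableOn g (Set.Ioo (0:ℝ) 1) volume :=
    (hg_cont.integrableOn_Icc (a := 0) (b := 1)).mono_set Set.Ioo_subset_Icc_self
  have hint_ig : Integrable (fun x => x) (igMeasure a b) := by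
    rw [hig_eq, integrable_withDensity_iff_integrable_smul hd_meas]
    exact hgint.congr hae.symm
  have hig_int_eq : ∫ x, x ∂(igMeasure a b) = ∫ x in Set.Ioo (0:ℝ) 1, g x := by
    rw [hig_eq, integral_withDensity_eq_integral_smul hd_meas]
    exact integral_congr_ae hae
  set J := ∫ x in (0:ℝ)..1, x ^ a * Real.exp (-(b * x)) with hJ
  have h1 : ∫ x in Set.Ioo (0:ℝ) 1, g x = G⁻¹ * b ^ a * J := by
    rw [← MeasureTheory.integral_Ioc_eq_integral_Ioo,
      ← intervalIntegral.integral_of_le zero_le_one, hJ,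
      ← intervalIntegral.integral_const_mul]
  have hsub : b * (b ^ a * J) = lGamma (a + 1) b := by
    have h2 := intervalIntegral.integral_comp_mul_left
      (a := (0:ℝ)) (b := (1:ℝ)) (fun s => s ^ a * Real.exp (-s)) hb.ne'
    have h3 : ∫ x in (0:ℝ)..1, (b * x) ^ a * Real.exp (-(b * x)) = b ^ a * J := by
      rw [hJ, ← intervalIntegral.integral_const_mul]
      refine intervalIntegral.integral_congr fun x hx => ?_
      have hx0 : 0 ≤ x := by rw [Set.uIcc_of_le zero_le_one] at hx; exact hx.1
      rw [Real.mul_rpow hb.le hx0]; ring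
    have h4 : lGamma (a + 1) b = ∫ s in (0:ℝ)..b, s ^ a * Real.exp (-s) := by
      unfold lGamma
      norm_num
    rw [h4, ← h3]
    rw [show (fun x : ℝ => (b * x) ^ a * Real.exp (-(b * x)))
        = fun x : ℝ => (fun s => s ^ a * Real.exp (-s)) (b * x) by rfl, h2]
    rw [mul_zero, mul_one, smul_eq_mul]
    field_simp
  have hrec : lGamma (a + 1) b = a * G - Real.exp (-b) * b ^ a := lGamma_succ ha hb.le
  have hdirac : Integrable (fun x : ℝ => x) (Measure.dirac 1) := by
    refine (integrable_const (1:ℝ)).congr ?_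
    rw [Filter.EventuallyEq, ae_dirac_eq]
    simp
  have hI1 : Integrable (fun x : ℝ => x) (ENNReal.ofReal (1 - ligPi a b) • igMeasure a b) :=
    hint_ig.smul_measure ENNReal.ofReal_ne_top
  have hI2 : Integrable (fun x : ℝ => x) (ENNReal.ofReal (ligPi a b) • Measure.dirac 1) :=
    hdirac.smul_measure ENNReal.ofReal_ne_top
  constructor
  · rw [ligMeasure, integral_add_measure hI1 hI2, integral_smul_measure, integral_smul_measure,
      integral_dirac, ENNReal.toReal_ofReal (by linarith), ENNReal.toReal_ofReal hpi0,
      hig_int_eq, h1]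
    have hbJ : b ^ a * J = b⁻¹ * (a * G - Real.exp (-b) * b ^ a) := by
      rw [← hrec, ← hsub]; field_simp
    rw [smul_eq_mul, smul_eq_mul, mul_assoc, hbJ]
    unfold ligPi
    rw [Real.exp_neg]
    have hE : Real.exp b ≠ 0 := (Real.exp_pos b).ne'
    rw [← hGdef]
    field_simp
    ring
  · have h12 : c1 + c2 ≠ 0 := by positivity
    field_simp
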